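/- Let S be a Γ-semigroup, γ₀ ∈ Γ, and suppose S_{γ₀} is a group. Then for every γ ∈ Γ, S_γ is a group. -/
import Mathlib


open FreeSemigroup

section GammaSemigroup

variable {S Γ : Type}

/-- One-step rewriting on words over S ⊕ Γ. -/
inductive GStep (m : S → Γ → S → S) (γ₀ : Γ) : List (S ⊕ Γ) → List (S ⊕ Γ) → Prop
  | gg (u v : List (S ⊕ Γ)) (γ₁ γ₂ : Γ) :
      GStep m γ₀ (u ++ Sum.inr γ₁ :: Sum.inr γ₂ :: v) (u ++ Sum.inr γ₁ :: v)
  | xgy (u v : List (S ⊕ Γ)) (x : S) (γ : Γ) (y : S) :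
      GStep m γ₀ (u ++ Sum.inl x :: Sum.inr γ :: Sum.inl y :: v) (u ++ Sum.inl (m x γ y) :: v)
  | xy (u v : List (S ⊕ Γ)) (x y : S) :
      GStep m γ₀ (u ++ Sum.inl x :: Sum.inl y :: v) (u ++ Sum.inl (m x γ₀ y) :: v)

/-- The defining relations on the free semigroup on S ⊕ Γ. -/
def GRel (m : S → Γ → S → S) (γ₀ : Γ) :
    FreeSemigroup (S ⊕ Γ) → FreeSemigroup (S ⊕ Γ) → Prop :=
  fun a b =>
    (∃ γ₁ γ₂ : Γ, a = of (Sum.inr γ₁) * of (Sum.inr γ₂) ∧ b = of (Sum.inr γ₁)) ∨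
    (∃ (x y : S) (γ : Γ), a = of (Sum.inl x) * of (Sum.inr γ) * of (Sum.inl y) ∧
      b = of (Sum.inl (m x γ y))) ∨
    (∃ x y : S, a = of (Sum.inl x) * of (Sum.inl y) ∧ b = of (Sum.inl (m x γ₀ y)))

/-- The congruence generated by the defining relations. -/
def GCon (m : S → Γ → S → S) (γ₀ : Γ) : Con (FreeSemigroup (S ⊕ Γ)) := conGen (GRel m γ₀)

/-- The universal semigroup Σ of the Γ-semigroup S. -/
abbrev USem (m : S → Γ → S → S) (γ₀ : Γ) := (GCon m γ₀).Quotient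

/-- The canonical map μ : S → Σ. -/
def gmu (m : S → Γ → S → S) (γ₀ : Γ) (x : S) : USem m γ₀ :=
  ((of (Sum.inl x) : FreeSemigroup (S ⊕ Γ)) : (GCon m γ₀).Quotient)

/-- The canonical map Γ → Σ. -/
def giota (m : S → Γ → S → S) (γ₀ : Γ) (γ : Γ) : USem m γ₀ :=
  ((of (Sum.inr γ) : FreeSemigroup (S ⊕ Γ)) : (GCon m γ₀).Quotient)

/-- Principal left ideal of an element of a semigroup. -/
def pLeft {T : Type} [Semigroup T] (a : T) : Set T := {w | ∃ t : T, w = t * a} ∪ {a}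

/-- Principal right ideal of an element of a semigroup. -/
def pRight {T : Type} [Semigroup T] (a : T) : Set T := {w | ∃ t : T, w = a * t} ∪ {a}

/-- Principal left ideal in the Γ-semigroup: SΓx ∪ {x}. -/
def pLeftG (m : S → Γ → S → S) (x : S) : Set S := {y | ∃ (s : S) (γ : Γ), y = m s γ x} ∪ {x}

/-- Principal right ideal in the Γ-semigroup: xΓS ∪ {x}. -/
def pRightG (m : S → Γ → S → S) (x : S) : Set S := {y | ∃ (γ : Γ) (s : S), y = m x γ s} ∪ {x}

/-- Green's H relation on the Γ-semigroup. -/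
def HrelG (m : S → Γ → S → S) (a b : S) : Prop := pLeftG m a = pLeftG m b ∧ pRightG m a = pRightG m b

/-- S_δ is a simple semigroup: its only two-sided ideal is S itself. -/
def SimpleAt (m : S → Γ → S → S) (δ : Γ) : Prop :=
  ∀ J : Set S, J.Nonempty → (∀ t : S, ∀ j ∈ J, m t δ j ∈ J ∧ m j δ t ∈ J) → J = Set.univ

/-- e is an idempotent of S_δ. -/
def IdemAt (m : S → Γ → S → S) (δ : Γ) (e : S) : Prop := m e δ e = e

/-- e is a primitive idempotent of S_δ. -/
def PrimAt (m : S → Γ → S → S) (δ : Γ) (e : S) : Prop :=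
  IdemAt m δ e ∧ ∀ f, IdemAt m δ f → m e δ f = f → m f δ e = f → f = e

/-- S_δ is completely simple. -/
def CSimpleAt (m : S → Γ → S → S) (δ : Γ) : Prop := SimpleAt m δ ∧ ∃ e, PrimAt m δ e

/-- S_δ has no zero element. -/
def NoZeroAt (m : S → Γ → S → S) (δ : Γ) : Prop := ¬ ∃ z : S, ∀ t : S, m z δ t = z ∧ m t δ z = z

/-- L is a left ideal of S_δ. -/
def LIdealAt (m : S → Γ → S → S) (δ : Γ) (L : Set S) : Prop :=
  L.Nonempty ∧ ∀ t : S, ∀ l ∈ L, m t δ l ∈ L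

/-- L is a minimal left ideal of S_δ. -/
def MinLIdealAt (m : S → Γ → S → S) (δ : Γ) (L : Set S) : Prop :=
  LIdealAt m δ L ∧ ∀ L' ⊆ L, LIdealAt m δ L' → L' = L

/-- S_δ is a group. -/
def GroupAt (m : S → Γ → S → S) (δ : Γ) : Prop :=
  ∃ e : S, (∀ a, m e δ a = a ∧ m a δ e = a) ∧ ∀ a, ∃ b, m a δ b = e ∧ m b δ a = e

/-- G is a subgroup (a sub-semigroup that is a group) of the semigroup T. -/
def IsSubgroupOf {T : Type} [Semigroup T] (G : Set T) : Prop :=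
  (∀ a ∈ G, ∀ b ∈ G, a * b ∈ G) ∧
  ∃ e ∈ G, (∀ g ∈ G, e * g = g ∧ g * e = g) ∧ ∀ g ∈ G, ∃ h ∈ G, g * h = e ∧ h * g = e

/-- The set Σ' = Σ \ Γ. -/
def USem' (m : S → Γ → S → S) (γ₀ : Γ) : Set (USem m γ₀) := {w | ¬ ∃ γ : Γ, w = giota m γ₀ γ}

end GammaSemigroup

theorem stmt (S Γ : Type) [Nonempty S] [Nonempty Γ] (m : S → Γ → S → S)
    (assoc : ∀ (a b c : S) (α β : Γ), m (m a α b) β c = m a α (m b β c)) (γ₀ : Γ) (hg : GroupAt m γ₀) : ∀ γ : Γ, GroupAt m γ := by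
  obtain ⟨e, hid, hinv⟩ := hg
  intro γ
  obtain ⟨u, hcu, huc⟩ := hinv (m e γ e)
  have key : ∀ a b : S, m a γ b = m a γ₀ (m (m e γ e) γ₀ b) := by
    intro a b
    calc m a γ b = m (m a γ₀ e) γ b := by rw [(hid a).2]
      _ = m a γ₀ (m e γ b) := by rw [assoc]
      _ = m a γ₀ (m e γ (m e γ₀ b)) := by rw [(hid b).1]
      _ = m a γ₀ (m (m e γ e) γ₀ b) := by rw [assoc]
  refine ⟨u, fun a => ⟨?_, ?_⟩, ?_⟩
  · rw [key, ← assoc, huc, (hid a).1]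
  · rw [key, hcu, (hid a).2]
  · intro a
    obtain ⟨a', ha1, ha2⟩ := hinv a
    refine ⟨m u γ₀ (m a' γ₀ u), ?_, ?_⟩
    · calc m a γ (m u γ₀ (m a' γ₀ u))
          = m a γ₀ (m (m e γ e) γ₀ (m u γ₀ (m a' γ₀ u))) := key _ _
        _ = m a γ₀ (m (m (m e γ e) γ₀ u) γ₀ (m a' γ₀ u)) := by rw [← assoc (m e γ e) u]
        _ = m a γ₀ (m e γ₀ (m a' γ₀ u)) := by rw [hcu]
        _ = m a γ₀ (m a' γ₀ u) := by rw [(hid _).1]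
        _ = m (m a γ₀ a') γ₀ u := by rw [assoc]
        _ = u := by rw [ha1, (hid u).1]
    · calc m (m u γ₀ (m a' γ₀ u)) γ a
          = m (m u γ₀ (m a' γ₀ u)) γ₀ (m (m e γ e) γ₀ a) := key _ _
        _ = m u γ₀ (m (m a' γ₀ u) γ₀ (m (m e γ e) γ₀ a)) := by rw [assoc]
        _ = m u γ₀ (m a' γ₀ (m u γ₀ (m (m e γ e) γ₀ a))) := by rw [assoc]
        _ = m u γ₀ (m a' γ₀ (m (m u γ₀ (m e γ e)) γ₀ a)) := by rw [← assoc u (m e γ e)]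
        _ = m u γ₀ (m a' γ₀ (m e γ₀ a)) := by rw [huc]
        _ = m u γ₀ (m a' γ₀ a) := by rw [(hid a).1]
        _ = m u γ₀ e := by rw [ha2]
        _ = u := (hid u).2
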